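/- Let p ≥ 1 and q be integers with p² + 4q > 0 and p² + 2q − 2 < p·√(p² + 4q), set α = (p + √(p² + 4q))/2, β = (p − √(p² + 4q))/2, let a, b be integers with c₁ = (b − aβ)/(α − β) > 0, and define Wₙ = c₁αⁿ − c₂βⁿ where c₂ = (b − aα)/(α − β). Let m ≥ 1 be an integer, let l₀, l₁ be integers with l₀, l₁ ≥ 1 − m, and let s₀, s₁ be natural numbers, not both zero. Then lim_{n→∞} [ (Σ_{k=n}^{∞} 1/(s₀·W_{mk+l₀} + s₁·W_{mk+l₁}))^{−1} − (s₀·W_{mn+l₀} − s₀·W_{m(n−1)+l₀} + s₁·W_{mn+l₁} − s₁·W_{m(n−1)+l₁}) ] = 0. -/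

import Mathlib

open Filter Topology

/-!
Put `u j = s₀ W(mj + l₀) + s₁ W(mj + l₁)` and `r = αᵐ ≥ 1`. Since `|β| < 1`, the `β`-parts die out
and `u j = C rʲ + o(1)` with `C = c₁ (s₀ α^l₀ + s₁ α^l₁) > 0`. Writing `u j = rʲ v j`, the tail
`Σ_{k ≥ n} 1 / u k` equals `r⁻ⁿ Σ_k r⁻ᵏ / v (n + k)`; comparing with the geometric tail of `v ≡ C`
shows that its inverse is `C (1 - r⁻¹) rⁿ` up to an error `Σ_k r⁻²ᵏ o(1) → 0` (Tannery's theorem),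
and `C (1 - r⁻¹) rⁿ = C rⁿ - C rⁿ⁻¹` is `u n - u (n - 1)` up to `o(1)`. For `r = 1` (i.e. `p = 1`,
`q = 0`) the series diverges, and both its `tsum` (junk value `0`) and `C (1 - r⁻¹) rⁿ` vanish.
-/

theorem tendsto_zpow_atTop_nhds_zero_of_norm_lt_one {𝕜 : Type*} [NormedDivisionRing 𝕜] {x : 𝕜}
    (hx : ‖x‖ < 1) : Tendsto (fun z : ℤ => x ^ z) atTop (𝓝 0) := by
  have htoNat : Tendsto Int.toNat atTop atTop :=
    tendsto_atTop_atTop.2 fun n => ⟨n, fun z hz => by omega⟩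
  refine ((tendsto_pow_atTop_nhds_zero_of_norm_lt_one hx).comp htoNat).congr' ?_
  filter_upwards [eventually_ge_atTop 0] with z hz
  simp [← zpow_natCast, Int.toNat_of_nonneg hz]

theorem summable_pow_mul_shift_of_tendsto {ρ L : ℝ} {w : ℕ → ℝ} (hρ : |ρ| < 1)
    (hw : Tendsto w atTop (𝓝 L)) (n : ℕ) : Summable fun k => ρ ^ k * w (n + k) := by
  obtain ⟨B, hB⟩ := isBounded_iff_forall_norm_le.1 (Metric.isBounded_range_of_tendsto w hw)
  refine ((summable_geometric_of_abs_lt_one (r := |ρ|) (by simpa using hρ)).mul_right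
    B).of_norm_bounded fun k => ?_
  rw [norm_mul, norm_pow, Real.norm_eq_abs ρ]
  exact mul_le_mul_of_nonneg_left (hB _ ⟨n + k, rfl⟩) (by positivity)

theorem tendsto_tsum_pow_mul_shift {ρ L : ℝ} {w : ℕ → ℝ} (hρ : |ρ| < 1)
    (hw : Tendsto w atTop (𝓝 L)) :
    Tendsto (fun n => ∑' k, ρ ^ k * w (n + k)) atTop (𝓝 ((1 - ρ)⁻¹ * L)) := by
  obtain ⟨B, hB⟩ := isBounded_iff_forall_norm_le.1 (Metric.isBounded_range_of_tendsto w hw)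
  have hlim := tendsto_tsum_of_dominated_convergence (bound := fun k => |ρ| ^ k * B)
    ((summable_geometric_of_abs_lt_one (by simpa using hρ)).mul_right B)
    (fun k => (hw.comp (tendsto_add_atTop_nat k)).const_mul (ρ ^ k))
    (Eventually.of_forall fun n k => by
      rw [norm_mul, norm_pow, Real.norm_eq_abs]
      exact mul_le_mul_of_nonneg_left (hB _ ⟨n + k, rfl⟩) (by positivity))
  simpa [tsum_mul_right, tsum_geometric_of_abs_lt_one hρ, Function.comp_def, add_comm] using hlim

theorem tsum_one_div_eq_zero_of_tendsto {u : ℕ → ℝ} {C : ℝ} (hC : C ≠ 0)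
    (hu : Tendsto u atTop (𝓝 C)) (n : ℕ) : ∑' k, 1 / u (n + k) = 0 := by
  refine tsum_eq_zero_of_not_summable fun hsum => ?_
  have hlim : Tendsto (fun k => 1 / u (n + k)) atTop (𝓝 (1 / C)) := by
    simpa [add_comm] using (hu.comp (tendsto_add_atTop_nat n)).inv₀ hC
  exact one_div_ne_zero hC (tendsto_nhds_unique hlim hsum.tendsto_atTop_zero)

theorem pow_mul_one_sub_mul_tsum_eq {ρ r C : ℝ} {x : ℕ → ℝ} (hρ : |ρ| < 1) (hρr : ρ * r = 1)
    (n : ℕ) (hx : Summable fun k => ρ ^ k * x (n + k)) :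
    r ^ n * (1 - C * (1 - ρ) * ∑' k, ρ ^ k * x (n + k)) =
      (1 - ρ) * ∑' k, (ρ ^ 2) ^ k * (r ^ (n + k) * (1 - C * x (n + k))) := by
  have hρ1 : 1 - ρ ≠ 0 := by linarith [le_abs_self ρ]
  calc r ^ n * (1 - C * (1 - ρ) * ∑' k, ρ ^ k * x (n + k))
      = (1 - ρ) * ((∑' k, ρ ^ k - C * ∑' k, ρ ^ k * x (n + k)) * r ^ n) := by
        rw [tsum_geometric_of_abs_lt_one hρ]
        field_simp
    _ = (1 - ρ) * ∑' k, (ρ ^ k - C * (ρ ^ k * x (n + k))) * r ^ n := by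
        rw [tsum_mul_right, (summable_geometric_of_abs_lt_one hρ).tsum_sub (hx.mul_left C),
          tsum_mul_left]
    _ = (1 - ρ) * ∑' k, (ρ ^ 2) ^ k * (r ^ (n + k) * (1 - C * x (n + k))) := by
        refine congrArg _ (tsum_congr fun k => ?_)
        have hk : ρ ^ k * r ^ k = 1 := by rw [← mul_pow, hρr, one_pow]
        rw [pow_add]
        linear_combination (-(ρ ^ k * r ^ n * (1 - C * x (n + k)))) * hk

theorem tendsto_inv_tsum_one_div_sub_of_one_lt {u : ℕ → ℝ} {C r : ℝ} (hC : 0 < C) (hr : 1 < r)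
    (hu : Tendsto (fun j => u j - C * r ^ j) atTop (𝓝 0)) :
    Tendsto (fun n => (∑' k, 1 / u (n + k))⁻¹ - C * (1 - r⁻¹) * r ^ n) atTop (𝓝 0) := by
  have hr0 : r ≠ 0 := (zero_lt_one.trans hr).ne'
  set ρ := r⁻¹
  have hρ0 : 0 < ρ := inv_pos.2 (zero_lt_one.trans hr)
  have hρ1 : ρ < 1 := inv_lt_one_of_one_lt₀ hr
  have hρ : |ρ| < 1 := by rwa [abs_of_pos hρ0]
  have hρ2 : |ρ ^ 2| < 1 := by rw [abs_pow]; exact pow_lt_one₀ (abs_nonneg ρ) hρ two_ne_zero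
  have hρr : ∀ j : ℕ, ρ ^ j * r ^ j = 1 := fun j => by
    rw [← mul_pow, inv_mul_cancel₀ hr0, one_pow]
  -- `u j = r ^ j * v j` with `v j → C`, and `w j → 0` measures `v j - C` on the scale `r⁻¹ ^ j`
  set v : ℕ → ℝ := fun j => u j * ρ ^ j
  set w : ℕ → ℝ := fun j => r ^ j * (1 - C * (v j)⁻¹)
  have hv : Tendsto v atTop (𝓝 C) := by
    have := (hu.mul (tendsto_pow_atTop_nhds_zero_of_lt_one hρ0.le hρ1)).const_add C
    rw [mul_zero, add_zero] at this
    refine this.congr fun j => ?_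
    simp only [v]
    linear_combination (-C) * hρr j
  have hw : Tendsto w atTop (𝓝 0) := by
    have := hu.div hv hC.ne'
    rw [zero_div] at this
    refine this.congr' ?_
    filter_upwards [hv.eventually_ne hC.ne'] with j hj
    simp only [Pi.div_apply, w]
    field_simp
    simp only [v]
    linear_combination (-u j) * hρr j
  set T : ℕ → ℝ := fun n => ∑' k, ρ ^ k * (v (n + k))⁻¹
  have hT : Tendsto T atTop (𝓝 ((1 - ρ)⁻¹ * C⁻¹)) :=
    tendsto_tsum_pow_mul_shift hρ (hv.inv₀ hC.ne')
  have hTlim : (1 - ρ)⁻¹ * C⁻¹ ≠ 0 := by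
    have : 1 - ρ ≠ 0 := by linarith
    positivity
  have hS : ∀ n, ∑' k, 1 / u (n + k) = ρ ^ n * T n := fun n => by
    rw [← tsum_mul_left]
    congr 1 with k
    simp only [v, pow_add]
    field_simp
  have hlim := ((tendsto_tsum_pow_mul_shift hρ2 hw).const_mul (1 - ρ)).div hT hTlim
  rw [mul_zero, mul_zero, zero_div] at hlim
  refine hlim.congr' ?_
  filter_upwards [hT.eventually_ne hTlim] with n hTn
  have hdefect : r ^ n * (1 - C * (1 - ρ) * T n) = (1 - ρ) * ∑' k, (ρ ^ 2) ^ k * w (n + k) :=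
    pow_mul_one_sub_mul_tsum_eq (C := C) (x := fun j => (v j)⁻¹) hρ (inv_mul_cancel₀ hr0) n
      (summable_pow_mul_shift_of_tendsto hρ (hv.inv₀ hC.ne') n)
  rw [Pi.div_apply, hS, ← hdefect]
  field_simp
  linear_combination hρr n

theorem tendsto_inv_tsum_one_div_sub {u : ℕ → ℝ} {C r : ℝ} (hC : 0 < C) (hr : 1 ≤ r)
    (hu : Tendsto (fun j => u j - C * r ^ j) atTop (𝓝 0)) :
    Tendsto (fun n => (∑' k, 1 / u (n + k))⁻¹ - C * (1 - r⁻¹) * r ^ n) atTop (𝓝 0) := by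
  rcases hr.lt_or_eq with hr | rfl
  · exact tendsto_inv_tsum_one_div_sub_of_one_lt hC hr hu
  · have hu' : Tendsto u atTop (𝓝 C) := by simpa using hu.add_const C
    simp_rw [tsum_one_div_eq_zero_of_tendsto hC.ne' hu']
    simp

theorem tendsto_inv_tsum_one_div_sub_sub {u : ℕ → ℝ} {C r : ℝ} (hC : 0 < C) (hr : 1 ≤ r)
    (hu : Tendsto (fun j => u j - C * r ^ j) atTop (𝓝 0)) :
    Tendsto (fun n => (∑' k, 1 / u (n + 1 + k))⁻¹ - (u (n + 1) - u n)) atTop (𝓝 0) := by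
  have h := ((tendsto_inv_tsum_one_div_sub hC hr hu).comp (tendsto_add_atTop_nat 1)).sub
    ((hu.comp (tendsto_add_atTop_nat 1)).sub hu)
  rw [sub_zero, sub_zero] at h
  refine h.congr fun n => ?_
  simp only [Function.comp_apply, pow_succ]
  field_simp [(zero_lt_one.trans_le hr).ne']
  ring

theorem tendsto_binet_sub_leading_term {α β c₁ c₂ : ℝ} {W : ℤ → ℝ}
    (hW : ∀ n, W n = c₁ * α ^ n - c₂ * β ^ n) (hα : α ≠ 0) (hβ : |β| < 1) {m : ℕ} (hm : 1 ≤ m)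
    (l : ℤ) : Tendsto (fun j : ℕ => W (m * j + l) - c₁ * α ^ l * (α ^ m) ^ j) atTop (𝓝 0) := by
  have hidx : Tendsto (fun j : ℕ => (m : ℤ) * j + l) atTop atTop :=
    tendsto_atTop_add_const_right _ l
      (tendsto_natCast_atTop_atTop.const_mul_atTop' (by exact_mod_cast hm))
  have h := ((tendsto_zpow_atTop_nhds_zero_of_norm_lt_one
    (by rwa [Real.norm_eq_abs])).comp hidx).const_mul (-c₂)
  rw [mul_zero] at h
  refine h.congr fun j => ?_
  rw [Function.comp_apply, hW, zpow_add₀ hα, zpow_mul, zpow_natCast, zpow_natCast]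
  ring

theorem one_le_add_sqrt_div_two {p q : ℤ} (hp : 1 ≤ p) (hdisc : 0 < (p : ℝ) ^ 2 + 4 * q) :
    1 ≤ ((p : ℝ) + √((p : ℝ) ^ 2 + 4 * q)) / 2 := by
  have hD : (1 : ℝ) ≤ (p : ℝ) ^ 2 + 4 * q := by
    have : (0 : ℤ) < p ^ 2 + 4 * q := by exact_mod_cast hdisc
    exact_mod_cast this
  have hp' : (1 : ℝ) ≤ p := by exact_mod_cast hp
  linarith [Real.one_le_sqrt.2 hD]

-- the square of `(p - √(p² + 4q)) / 2` is `(p² + 2q - p √(p² + 4q)) / 2`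
theorem abs_sub_sqrt_div_two_lt_one {p q : ℝ} (hdisc : 0 ≤ p ^ 2 + 4 * q)
    (hcond : p ^ 2 + 2 * q - 2 < p * √(p ^ 2 + 4 * q)) : |(p - √(p ^ 2 + 4 * q)) / 2| < 1 := by
  have hsqrt := Real.sq_sqrt hdisc
  rw [← sq_lt_one_iff_abs_lt_one]
  nlinarith

theorem inverse_tail_sum_two_terms_general (p q : ℤ) (α β c₁ c₂ : ℝ)
    (hp : 1 ≤ p)
    (hdisc : 0 < (p : ℝ) ^ 2 + 4 * q)
    (hcond : (p : ℝ) ^ 2 + 2 * q - 2 < p * Real.sqrt ((p : ℝ) ^ 2 + 4 * q))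
    (hα : α = ((p : ℝ) + Real.sqrt ((p : ℝ) ^ 2 + 4 * q)) / 2)
    (hβ : β = ((p : ℝ) - Real.sqrt ((p : ℝ) ^ 2 + 4 * q)) / 2)
    (hc₁pos : 0 < c₁)
    (W : ℤ → ℝ) (hW : ∀ n : ℤ, W n = c₁ * α ^ n - c₂ * β ^ n)
    (m : ℕ) (hm : 1 ≤ m)
    (l₀ l₁ : ℤ)
    (s₀ s₁ : ℕ) (hs : s₀ ≠ 0 ∨ s₁ ≠ 0) :
    Tendsto (fun n : ℕ =>
      (∑' k : ℕ, 1 / ((s₀ : ℝ) * W ((m : ℤ) * (n + k) + l₀) +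
        (s₁ : ℝ) * W ((m : ℤ) * (n + k) + l₁)))⁻¹ -
      ((s₀ : ℝ) * W ((m : ℤ) * n + l₀) - (s₀ : ℝ) * W ((m : ℤ) * ((n : ℤ) - 1) + l₀) +
        (s₁ : ℝ) * W ((m : ℤ) * n + l₁) - (s₁ : ℝ) * W ((m : ℤ) * ((n : ℤ) - 1) + l₁)))
      atTop (nhds 0) := by
  have hα1 : 1 ≤ α := hα ▸ one_le_add_sqrt_div_two hp hdisc
  have hα0 : α ≠ 0 := by positivity
  have hβ1 : |β| < 1 := hβ ▸ abs_sub_sqrt_div_two_lt_one hdisc.le hcond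
  set C := c₁ * ((s₀ : ℝ) * α ^ l₀ + (s₁ : ℝ) * α ^ l₁)
  have hC : 0 < C := by rcases hs with hs | hs <;> positivity
  have hu : Tendsto (fun j : ℕ => ((s₀ : ℝ) * W (m * j + l₀) + (s₁ : ℝ) * W (m * j + l₁))
      - C * (α ^ m) ^ j) atTop (𝓝 0) := by
    have h := ((tendsto_binet_sub_leading_term hW hα0 hβ1 hm l₀).const_mul (s₀ : ℝ)).add
      ((tendsto_binet_sub_leading_term hW hα0 hβ1 hm l₁).const_mul (s₁ : ℝ))
    rw [mul_zero, mul_zero, add_zero] at h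
    exact h.congr fun j => by ring
  rw [← tendsto_add_atTop_iff_nat 1]
  refine (tendsto_inv_tsum_one_div_sub_sub hC (one_le_pow₀ hα1) hu).congr fun n => ?_
  push_cast
  ring_nf

/-- Corollary 3.2: the inverse of the tail sum `Σ_{k=n}^∞ 1/(s₀·W_{mk+l₀} + s₁·W_{mk+l₁})`
is asymptotically `s₀·W_{mn+l₀} − s₀·W_{m(n−1)+l₀} + s₁·W_{mn+l₁} − s₁·W_{m(n−1)+l₁}`. -/
theorem inverse_tail_sum_two_terms (p q a b : ℤ) (α β c₁ c₂ : ℝ)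
    (hp : 1 ≤ p)
    (hdisc : 0 < (p : ℝ) ^ 2 + 4 * q)
    (hcond : (p : ℝ) ^ 2 + 2 * q - 2 < p * Real.sqrt ((p : ℝ) ^ 2 + 4 * q))
    (hα : α = ((p : ℝ) + Real.sqrt ((p : ℝ) ^ 2 + 4 * q)) / 2)
    (hβ : β = ((p : ℝ) - Real.sqrt ((p : ℝ) ^ 2 + 4 * q)) / 2)
    (hc₁ : c₁ = ((b : ℝ) - a * β) / (α - β))
    (hc₂ : c₂ = ((b : ℝ) - a * α) / (α - β))
    (hc₁pos : 0 < c₁)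
    (W : ℤ → ℝ) (hW : ∀ n : ℤ, W n = c₁ * α ^ n - c₂ * β ^ n)
    (m : ℕ) (hm : 1 ≤ m)
    (l₀ l₁ : ℤ) (hl₀ : 1 - (m : ℤ) ≤ l₀) (hl₁ : 1 - (m : ℤ) ≤ l₁)
    (s₀ s₁ : ℕ) (hs : s₀ ≠ 0 ∨ s₁ ≠ 0) :
    Tendsto (fun n : ℕ =>
      (∑' k : ℕ, 1 / ((s₀ : ℝ) * W ((m : ℤ) * (n + k) + l₀) +
        (s₁ : ℝ) * W ((m : ℤ) * (n + k) + l₁)))⁻¹ -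
      ((s₀ : ℝ) * W ((m : ℤ) * n + l₀) - (s₀ : ℝ) * W ((m : ℤ) * ((n : ℤ) - 1) + l₀) +
        (s₁ : ℝ) * W ((m : ℤ) * n + l₁) - (s₁ : ℝ) * W ((m : ℤ) * ((n : ℤ) - 1) + l₁)))
      atTop (nhds 0) :=
  inverse_tail_sum_two_terms_general p q α β c₁ c₂ hp hdisc hcond hα hβ hc₁pos W hW m hm l₀ l₁ s₀ s₁
    hs
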